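/- arXiv:2408.10362 — 4 statements merged into one kernel-verified Lean document; each statement's English description precedes it below -/
import Mathlib

section
/- There exists a formula ψ(x, y) in the first-order language L(S1, S2) (the language of ordered rings extended with two unary relation symbols S1 and S2) such that for every pair of disjoint finite sets S1, S2 ⊆ ℝ there is a continuous piecewise linear function f : ℝ → ℝ with the following two properties: (i) for all a, b ∈ ℝ, ψ(a, b) holds in the structure (ℝ; 0, 1, +, ·, <, S1, S2) if and only if f(a) = b; and (ii) ∫₀¹ f(x) dx = 0 if and only if |S1| = |S2|. -/
open FirstOrder

/-- A closed convex polyhedron in ℝ: a finite intersection of closed half-spaces. -/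
def IsPolyhedron1 (P : Set ℝ) : Prop :=
  ∃ s : Finset (ℝ × ℝ), P = {x : ℝ | ∀ p ∈ s, 0 ≤ p.1 * x + p.2}

/-- A continuous piecewise linear function ℝ → ℝ (the class PL(1)). -/
def IsPWL1 (f : ℝ → ℝ) : Prop :=
  Continuous f ∧
    ∃ Ps : Finset (Set ℝ),
      (∀ P ∈ Ps, IsPolyhedron1 P) ∧
      (⋃ P ∈ Ps, P) = Set.univ ∧
      ∀ P ∈ Ps, ∃ a b : ℝ, ∀ x ∈ P, f x = a * x + b

/-- Function symbols of the language L(S1, S2): 0, 1, +, ·. -/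
inductive LSFunc : ℕ → Type
  | zero : LSFunc 0
  | one : LSFunc 0
  | add : LSFunc 2
  | mul : LSFunc 2

/-- Relation symbols of L(S1, S2): <, S1, S2. -/
inductive LSRel : ℕ → Type
  | lt : LSRel 2
  | S1 : LSRel 1
  | S2 : LSRel 1

/-- The language L(S1, S2): ordered rings with two extra unary relation symbols. -/
def LS : FirstOrder.Language := ⟨LSFunc, LSRel⟩

def LSfunMap : ∀ {n : ℕ}, LSFunc n → (Fin n → ℝ) → ℝ
  | _, LSFunc.zero, _ => 0
  | _, LSFunc.one, _ => 1
  | _, LSFunc.add, v => v 0 + v 1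
  | _, LSFunc.mul, v => v 0 * v 1

def LSRelMap (S1 S2 : Set ℝ) : ∀ {n : ℕ}, LSRel n → (Fin n → ℝ) → Prop
  | _, LSRel.lt, v => v 0 < v 1
  | _, LSRel.S1, v => v 0 ∈ S1
  | _, LSRel.S2, v => v 0 ∈ S2

/-- The L(S1,S2)-structure (ℝ; 0, 1, +, ·, <, S1, S2). -/
def lsStruct (S1 S2 : Set ℝ) : LS.Structure ℝ :=
  ⟨fun {_} => LSfunMap, fun {_} => LSRelMap S1 S2⟩

/-- Realization of a formula with two free variables in (ℝ; 0,1,+,·,<,S1,S2). -/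
def RealizesLS (S1 S2 : Set ℝ) (ψ : LS.Formula (Fin 2)) (a b : ℝ) : Prop :=
  letI := lsStruct S1 S2
  ψ.Realize ![a, b]

/-!
Push `S₁ ∪ S₂` into `(0, 1)` by the definable injection `compress s = (1 + s / (1 + |s|)) / 2`
and let `3 w` be the least gap between points of `{0, 1} ∪ compress (S₁ ∪ S₂)`. Put a tent of
half-width `w` and area `1` at every compressed point, pointing up for `S₁` and down for `S₂`.
The tents have disjoint supports inside `[0, 1]`, so their sum `f` is piecewise linear with
`∫₀¹ f = |S₁| - |S₂|`. Its graph is defined uniformly in `S₁, S₂`: the formula defines `w` as a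
third of the least gap, and then `f x` is read off the only tent whose center is closer than `w`
to `x`, or is `0` when there is none.
-/

open Set

noncomputable section

theorem isPolyhedron1_univ : IsPolyhedron1 univ := ⟨∅, by simp⟩

theorem IsPolyhedron1.inter {P Q : Set ℝ} (hP : IsPolyhedron1 P) (hQ : IsPolyhedron1 Q) :
    IsPolyhedron1 (P ∩ Q) := by
  classical
  obtain ⟨s, rfl⟩ := hP
  obtain ⟨t, rfl⟩ := hQ
  exact ⟨s ∪ t, by ext; simp [or_imp, forall_and]⟩

theorem isPolyhedron1_Iic (a : ℝ) : IsPolyhedron1 (Iic a) :=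
  ⟨{(-1, a)}, by ext; simp [neg_add_eq_sub]⟩

theorem isPolyhedron1_Ici (a : ℝ) : IsPolyhedron1 (Ici a) :=
  ⟨{(1, -a)}, by ext; simp [← sub_eq_add_neg]⟩

theorem isPolyhedron1_Icc (a b : ℝ) : IsPolyhedron1 (Icc a b) := by
  rw [← Ici_inter_Iic]
  exact (isPolyhedron1_Ici a).inter (isPolyhedron1_Iic b)

def AffineOn (f : ℝ → ℝ) (P : Set ℝ) : Prop :=
  ∃ a b : ℝ, ∀ x ∈ P, f x = a * x + b

theorem AffineOn.mono {f : ℝ → ℝ} {P Q : Set ℝ} (hf : AffineOn f Q) (hPQ : P ⊆ Q) :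
    AffineOn f P :=
  let ⟨a, b, h⟩ := hf; ⟨a, b, fun x hx => h x (hPQ hx)⟩

theorem AffineOn.add {f g : ℝ → ℝ} {P : Set ℝ} (hf : AffineOn f P) (hg : AffineOn g P) :
    AffineOn (fun x => f x + g x) P := by
  obtain ⟨a, b, hf⟩ := hf
  obtain ⟨c, d, hg⟩ := hg
  exact ⟨a + c, b + d, fun x hx => by simp only [hf x hx, hg x hx]; ring⟩

theorem AffineOn.neg {f : ℝ → ℝ} {P : Set ℝ} (hf : AffineOn f P) :
    AffineOn (fun x => -f x) P := by
  obtain ⟨a, b, hf⟩ := hf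
  exact ⟨-a, -b, fun x hx => by simp only [hf x hx]; ring⟩

theorem isPWL1_const (c : ℝ) : IsPWL1 fun _ => c :=
  ⟨continuous_const, {univ}, by simp [isPolyhedron1_univ], by simp,
    by simp only [Finset.mem_singleton, forall_eq]; exact ⟨0, c, by simp⟩⟩

theorem IsPWL1.add {f g : ℝ → ℝ} (hf : IsPWL1 f) (hg : IsPWL1 g) :
    IsPWL1 fun x => f x + g x := by
  classical
  obtain ⟨hfc, Ps, hPs, hPcov, hfP⟩ := hf
  obtain ⟨hgc, Qs, hQs, hQcov, hgQ⟩ := hg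
  refine ⟨hfc.add hgc, Finset.image₂ (· ∩ ·) Ps Qs, ?_, ?_, ?_⟩
  · simp only [Finset.mem_image₂]
    rintro _ ⟨P, hP, Q, hQ, rfl⟩
    exact (hPs P hP).inter (hQs Q hQ)
  · refine eq_univ_of_forall fun x => ?_
    obtain ⟨P, hP, hxP⟩ := mem_iUnion₂.1 (hPcov.symm ▸ mem_univ x)
    obtain ⟨Q, hQ, hxQ⟩ := mem_iUnion₂.1 (hQcov.symm ▸ mem_univ x)
    exact mem_iUnion₂.2 ⟨P ∩ Q, Finset.mem_image₂_of_mem hP hQ, hxP, hxQ⟩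
  · simp only [Finset.mem_image₂]
    rintro _ ⟨P, hP, Q, hQ, rfl⟩
    exact (AffineOn.mono (hfP P hP) inter_subset_left).add
      (AffineOn.mono (hgQ Q hQ) inter_subset_right)

theorem IsPWL1.neg {f : ℝ → ℝ} (hf : IsPWL1 f) : IsPWL1 fun x => -f x :=
  let ⟨hfc, Ps, hPs, hPcov, hfP⟩ := hf
  ⟨hfc.neg, Ps, hPs, hPcov, fun P hP => AffineOn.neg (hfP P hP)⟩

theorem IsPWL1.sub {f g : ℝ → ℝ} (hf : IsPWL1 f) (hg : IsPWL1 g) :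
    IsPWL1 fun x => f x - g x := by
  simpa only [sub_eq_add_neg] using hf.add hg.neg

theorem IsPWL1.finsetSum {ι : Type*} (s : Finset ι) {f : ι → ℝ → ℝ}
    (hf : ∀ i ∈ s, IsPWL1 (f i)) : IsPWL1 fun x => ∑ i ∈ s, f i x := by
  classical
  induction s using Finset.induction_on with
  | empty => simpa using isPWL1_const 0
  | insert i s hi ih =>
    simp only [Finset.sum_insert hi]
    exact (hf i (Finset.mem_insert_self i s)).add
      (ih fun j hj => hf j (Finset.mem_insert_of_mem hj))

def tent (w u x : ℝ) : ℝ := max (w - |x - u|) 0 / w ^ 2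

theorem continuous_tent (w u : ℝ) : Continuous (tent w u) := by
  unfold tent; fun_prop

theorem tent_eq_zero {w u x : ℝ} (h : w ≤ |x - u|) : tent w u x = 0 := by
  rw [tent, max_eq_right (by linarith), zero_div]

theorem tent_of_abs_le {w u x : ℝ} (h : |x - u| ≤ w) : tent w u x = (w - |x - u|) / w ^ 2 := by
  rw [tent, max_eq_left (by linarith)]

theorem tent_eq_zero_of_le_sub {w u x : ℝ} (h : x ≤ u - w) : tent w u x = 0 :=
  tent_eq_zero ((by linarith : w ≤ -(x - u)).trans (neg_le_abs _))

theorem tent_eq_zero_of_add_le {w u x : ℝ} (h : u + w ≤ x) : tent w u x = 0 :=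
  tent_eq_zero ((by linarith : w ≤ x - u).trans (le_abs_self _))

theorem tent_of_mem_Icc_sub {w u x : ℝ} (h : x ∈ Icc (u - w) u) :
    tent w u x = (x - (u - w)) / w ^ 2 := by
  rw [tent_of_abs_le (by rw [abs_of_nonpos (by linarith [h.2])]; linarith [h.1]),
    abs_of_nonpos (by linarith [h.2])]
  ring

theorem tent_of_mem_Icc_add {w u x : ℝ} (h : x ∈ Icc u (u + w)) :
    tent w u x = (u + w - x) / w ^ 2 := by
  rw [tent_of_abs_le (by rw [abs_of_nonneg (by linarith [h.1])]; linarith [h.2]),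
    abs_of_nonneg (by linarith [h.1])]
  ring

theorem isPWL1_tent (w u : ℝ) : IsPWL1 (tent w u) := by
  classical
  refine ⟨continuous_tent w u, {Iic (u - w), Icc (u - w) u, Icc u (u + w), Ici (u + w)},
    ?_, ?_, ?_⟩
  · simp [isPolyhedron1_Iic, isPolyhedron1_Icc, isPolyhedron1_Ici]
  · refine eq_univ_of_forall fun x => ?_
    simp only [Finset.mem_insert, Finset.mem_singleton, iUnion_iUnion_eq_or_left,
      iUnion_iUnion_eq_left, mem_union, mem_Iic, mem_Icc, mem_Ici]
    rcases le_total x u with hxu | hxu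
    · by_cases hx : x ≤ u - w
      · exact Or.inl hx
      · exact Or.inr (Or.inl ⟨by linarith, hxu⟩)
    · by_cases hx : u + w ≤ x
      · exact Or.inr (Or.inr (Or.inr hx))
      · exact Or.inr (Or.inr (Or.inl ⟨hxu, by linarith⟩))
  · simp only [Finset.mem_insert, Finset.mem_singleton, forall_eq_or_imp, forall_eq]
    refine ⟨⟨0, 0, fun x hx => ?_⟩, ⟨1 / w ^ 2, -(u - w) / w ^ 2, fun x hx => ?_⟩,
      ⟨-1 / w ^ 2, (u + w) / w ^ 2, fun x hx => ?_⟩, ⟨0, 0, fun x hx => ?_⟩⟩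
    · rw [tent_eq_zero_of_le_sub hx]; ring
    · rw [tent_of_mem_Icc_sub hx]; ring
    · rw [tent_of_mem_Icc_add hx]; ring
    · rw [tent_eq_zero_of_add_le hx]; ring

theorem integral_tent {w u a b : ℝ} (hw : 0 < w) (ha : a ≤ u - w) (hb : u + w ≤ b) :
    ∫ x in a..b, tent w u x = 1 := by
  have hint (c d : ℝ) : IntervalIntegrable (tent w u) MeasureTheory.volume c d :=
    (continuous_tent w u).intervalIntegrable c d
  have left : ∫ x in a..u - w, tent w u x = 0 := by
    refine (intervalIntegral.integral_congr fun x hx => ?_).trans intervalIntegral.integral_zero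
    exact tent_eq_zero_of_le_sub (by rw [uIcc_of_le ha] at hx; exact hx.2)
  have right : ∫ x in u + w..b, tent w u x = 0 := by
    refine (intervalIntegral.integral_congr fun x hx => ?_).trans intervalIntegral.integral_zero
    exact tent_eq_zero_of_add_le (by rw [uIcc_of_le hb] at hx; exact hx.1)
  have rising : ∫ x in u - w..u, tent w u x = 1 / 2 := by
    rw [intervalIntegral.integral_congr fun x hx =>
      tent_of_mem_Icc_sub (by rwa [uIcc_of_le (by linarith)] at hx)]
    simp only [intervalIntegral.integral_div,
      intervalIntegral.integral_comp_sub_right (fun x => x), integral_id]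
    field_simp
    ring
  have falling : ∫ x in u..u + w, tent w u x = 1 / 2 := by
    rw [intervalIntegral.integral_congr fun x hx =>
      tent_of_mem_Icc_add (by rwa [uIcc_of_le (by linarith)] at hx)]
    simp only [intervalIntegral.integral_div,
      intervalIntegral.integral_comp_sub_left (fun x => x), integral_id]
    field_simp
    ring
  rw [← intervalIntegral.integral_add_adjacent_intervals (hint a (u - w)) (hint _ b),
    ← intervalIntegral.integral_add_adjacent_intervals (hint (u - w) u) (hint u b),
    ← intervalIntegral.integral_add_adjacent_intervals (hint u (u + w)) (hint _ b),
    left, rising, falling, right]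
  norm_num

def signedTents (U₁ U₂ : Finset ℝ) (w x : ℝ) : ℝ :=
  ∑ u ∈ U₁, tent w u x - ∑ u ∈ U₂, tent w u x

theorem isPWL1_signedTents (U₁ U₂ : Finset ℝ) (w : ℝ) : IsPWL1 (signedTents U₁ U₂ w) :=
  (IsPWL1.finsetSum U₁ fun u _ => isPWL1_tent w u).sub
    (IsPWL1.finsetSum U₂ fun u _ => isPWL1_tent w u)

theorem integral_signedTents {U₁ U₂ : Finset ℝ} {w a b : ℝ} (hw : 0 < w)
    (hU : ∀ u ∈ U₁ ∪ U₂, a ≤ u - w ∧ u + w ≤ b) :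
    ∫ x in a..b, signedTents U₁ U₂ w x = (U₁.card : ℝ) - U₂.card := by
  have hint : ∀ U : Finset ℝ, IntervalIntegrable (fun x => ∑ u ∈ U, tent w u x)
      MeasureTheory.volume a b := fun U =>
    (continuous_finsetSum U fun u _ => continuous_tent w u).intervalIntegrable a b
  have hsum : ∀ U ⊆ U₁ ∪ U₂, ∫ x in a..b, ∑ u ∈ U, tent w u x = U.card := fun U hU' => by
    rw [intervalIntegral.integral_finsetSum fun u _ =>
        (continuous_tent w u).intervalIntegrable a b,
      Finset.sum_congr rfl fun u hu => integral_tent hw (hU u (hU' hu)).1 (hU u (hU' hu)).2]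
    simp
  unfold signedTents
  rw [intervalIntegral.integral_sub (hint U₁) (hint U₂), hsum U₁ Finset.subset_union_left,
    hsum U₂ Finset.subset_union_right]

theorem sum_tent_eq_zero {U : Finset ℝ} {w x : ℝ} (h : ∀ u ∈ U, w ≤ |x - u|) :
    ∑ u ∈ U, tent w u x = 0 :=
  Finset.sum_eq_zero fun u hu => tent_eq_zero (h u hu)

theorem sum_tent_eq_ite {U : Finset ℝ} {w x u₀ : ℝ} (h : ∀ u ∈ U, u ≠ u₀ → w ≤ |x - u|) :
    ∑ u ∈ U, tent w u x = if u₀ ∈ U then tent w u₀ x else 0 := by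
  rw [← Finset.sum_ite_eq' U u₀ (fun u => tent w u x)]
  refine Finset.sum_congr rfl fun u hu => ?_
  split_ifs with hu₀
  · rw [hu₀]
  · exact tent_eq_zero (h u hu hu₀)

/-- The graph of `signedTents U₁ U₂ w` for `2 w`-separated centers: `f x` is read off the tent
of the only center closer than `w` to `x`, if there is one. -/
def TentGraph (U₁ U₂ : Set ℝ) (w x y : ℝ) : Prop :=
  (∃ u, |x - u| < w ∧ (u ∈ U₁ ∧ y = tent w u x ∨ u ∈ U₂ ∧ y = -tent w u x)) ∨
    y = 0 ∧ ∀ u ∈ U₁ ∪ U₂, w ≤ |x - u|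

theorem le_abs_sub_of_near {w x u v : ℝ} (hsep : 2 * w ≤ |u - v|) (hu : |x - u| < w) :
    w ≤ |x - v| := by
  have := abs_sub_le u x v
  rw [abs_sub_comm u x] at this
  linarith

theorem signedTents_eq_iff {U₁ U₂ : Finset ℝ} {w x y : ℝ} (hdisj : Disjoint U₁ U₂)
    (hsep : (↑(U₁ ∪ U₂) : Set ℝ).Pairwise fun u v => 2 * w ≤ |u - v|) :
    signedTents U₁ U₂ w x = y ↔ TentGraph ↑U₁ ↑U₂ w x y := by
  have near {u} (hu : u ∈ U₁ ∪ U₂) (hxu : |x - u| < w) :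
      signedTents U₁ U₂ w x = if u ∈ U₁ then tent w u x else -tent w u x := by
    have far : ∀ v ∈ U₁ ∪ U₂, v ≠ u → w ≤ |x - v| := fun v hv hvu =>
      le_abs_sub_of_near (hsep hu hv hvu.symm) hxu
    rw [signedTents, sum_tent_eq_ite fun v hv => far v (Finset.mem_union_left _ hv),
      sum_tent_eq_ite fun v hv => far v (Finset.mem_union_right _ hv)]
    by_cases hu₁ : u ∈ U₁
    · simp [hu₁, Finset.disjoint_left.1 hdisj hu₁]
    · simp [hu₁, (Finset.mem_union.1 hu).resolve_left hu₁]
  have far (hfar : ∀ u ∈ U₁ ∪ U₂, w ≤ |x - u|) : signedTents U₁ U₂ w x = 0 := by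
    rw [signedTents, sum_tent_eq_zero fun u hu => hfar u (Finset.mem_union_left _ hu),
      sum_tent_eq_zero fun u hu => hfar u (Finset.mem_union_right _ hu), sub_zero]
  constructor
  · rintro rfl
    by_cases h : ∃ u ∈ U₁ ∪ U₂, |x - u| < w
    · obtain ⟨u, hu, hxu⟩ := h
      refine Or.inl ⟨u, hxu, ?_⟩
      rw [near hu hxu]
      split_ifs with hu₁
      · exact Or.inl ⟨hu₁, rfl⟩
      · exact Or.inr ⟨(Finset.mem_union.1 hu).resolve_left hu₁, rfl⟩
    · simp only [not_exists, not_and, not_lt] at h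
      exact Or.inr ⟨far h, by simpa using h⟩
  · rintro (⟨u, hxu, ⟨hu₁, rfl⟩ | ⟨hu₂, rfl⟩⟩ | ⟨rfl, hfar⟩)
    · rw [near (Finset.mem_union_left _ hu₁) hxu, if_pos (Finset.mem_coe.1 hu₁)]
    · rw [near (Finset.mem_union_right _ hu₂) hxu, if_neg (Finset.disjoint_right.1 hdisj hu₂)]
    · exact far (by simpa using hfar)

def compress (s : ℝ) : ℝ := (1 + s / (1 + |s|)) / 2

theorem strictMono_compress : StrictMono compress := by
  have h : StrictMono fun s : ℝ => s / (1 + |s|) := by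
    refine strictMono_of_odd_strictMonoOn_nonneg (fun s => by simp only [abs_neg, neg_div]) ?_
    rintro s (hs : 0 ≤ s) t (ht : 0 ≤ t) hst
    simp [abs_of_nonneg, mul_add, mul_comm s t, div_lt_div_iff₀, hs.trans_lt (lt_one_add _),
      ht.trans_lt (lt_one_add _), *]
  intro s t hst
  have := h hst
  simp only [compress]
  linarith

theorem eq_compress_iff {s u : ℝ} : u = compress s ↔ (u + u - 1) * (1 + |s|) = s := by
  have : (0 : ℝ) < 1 + |s| := by positivity
  rw [compress, ← sub_eq_zero, ← sub_eq_zero (a := (u + u - 1) * _)]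
  constructor <;> intro h
  · field_simp at h
    linear_combination h
  · field_simp
    linear_combination h

theorem compress_mem_Ioo (s : ℝ) : compress s ∈ Ioo 0 1 := by
  have hpos : 0 < 1 + |s| := by positivity
  have : |s / (1 + |s|)| < 1 := by
    rw [abs_div, abs_of_pos hpos, div_lt_one hpos]
    linarith
  rw [compress, mem_Ioo]
  constructor <;> linarith [abs_lt.1 this]

def gapSet (E : Set ℝ) : Set ℝ := {g | ∃ a ∈ E, ∃ b ∈ E, a < b ∧ b = a + g}

section gapSet

variable {E : Set ℝ} {g : ℝ}

theorem exists_isLeast_gapSet (hE : E.Finite) {a b : ℝ} (ha : a ∈ E) (hb : b ∈ E) (hab : a < b) :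
    ∃ g, IsLeast (gapSet E) g := by
  have hfin : (gapSet E).Finite := by
    refine ((hE.prod hE).image fun p => p.2 - p.1).subset ?_
    rintro g ⟨c, hc, d, hd, -, rfl⟩
    exact ⟨(c, c + g), ⟨hc, hd⟩, by simp⟩
  obtain ⟨g, hg, hmin⟩ := exists_min_image (gapSet E) id hfin ⟨b - a, a, ha, b, hb, hab, by ring⟩
  exact ⟨g, hg, hmin⟩

theorem IsLeast.pos_of_gapSet (hg : IsLeast (gapSet E) g) : 0 < g := by
  obtain ⟨a, -, b, -, hab, rfl⟩ := hg.1
  linarith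

theorem IsLeast.le_sub_of_gapSet (hg : IsLeast (gapSet E) g) {a b : ℝ} (ha : a ∈ E) (hb : b ∈ E)
    (hab : a < b) : g ≤ b - a :=
  hg.2 ⟨a, ha, b, hb, hab, by ring⟩

theorem IsLeast.le_abs_sub_of_gapSet (hg : IsLeast (gapSet E) g) {a b : ℝ} (ha : a ∈ E)
    (hb : b ∈ E) (hab : a ≠ b) : g ≤ |a - b| := by
  rcases hab.lt_or_gt with hab | hab
  · rw [abs_sub_comm, abs_of_pos (sub_pos.2 hab)]
    exact hg.le_sub_of_gapSet ha hb hab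
  · rw [abs_of_pos (sub_pos.2 hab)]
    exact hg.le_sub_of_gapSet hb ha hab

end gapSet

def breakpoints (A B : Set ℝ) : Set ℝ := insert 0 (insert 1 (compress '' A ∪ compress '' B))

section breakpoints

variable {A B : Set ℝ} {w : ℝ}

theorem exists_isLeast_gapSet_breakpoints (hA : A.Finite) (hB : B.Finite) :
    ∃ w, IsLeast (gapSet (breakpoints A B)) (3 * w) := by
  obtain ⟨g, hg⟩ := exists_isLeast_gapSet (((hA.image _).union (hB.image _)).insert 1 |>.insert 0)
    (mem_insert 0 _) (mem_insert_of_mem 0 (mem_insert 1 _)) one_pos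
  exact ⟨g / 3, by rwa [mul_div_cancel₀ g three_ne_zero]⟩

theorem pairwise_of_isLeast_gapSet_breakpoints (hw : IsLeast (gapSet (breakpoints A B)) (3 * w)) :
    (compress '' A ∪ compress '' B).Pairwise fun u v => 2 * w ≤ |u - v| := by
  intro u hu v hv huv
  have := hw.le_abs_sub_of_gapSet (mem_insert_of_mem 0 (mem_insert_of_mem 1 hu))
    (mem_insert_of_mem 0 (mem_insert_of_mem 1 hv)) huv
  linarith [hw.pos_of_gapSet]

theorem sub_nonneg_and_add_le_one_of_isLeast_gapSet
    (hw : IsLeast (gapSet (breakpoints A B)) (3 * w)) {u : ℝ}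
    (hu : u ∈ compress '' A ∪ compress '' B) :
    0 ≤ u - w ∧ u + w ≤ 1 := by
  have hu01 : u ∈ Ioo 0 1 := by
    rcases hu with ⟨s, -, rfl⟩ | ⟨s, -, rfl⟩ <;> exact compress_mem_Ioo s
  have hu' := mem_insert_of_mem 0 (mem_insert_of_mem 1 hu)
  have h0 := hw.le_sub_of_gapSet (mem_insert 0 _) hu' hu01.1
  have h1 := hw.le_sub_of_gapSet hu' (mem_insert_of_mem 0 (mem_insert 1 _)) hu01.2
  have := hw.pos_of_gapSet
  constructor <;> linarith

end breakpoints

open FirstOrder.Language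

namespace LS

variable {α : Type}

instance : Zero (LS.Term α) := ⟨Term.func LSFunc.zero ![]⟩
instance : One (LS.Term α) := ⟨Term.func LSFunc.one ![]⟩
instance : Add (LS.Term α) := ⟨fun t s => Term.func LSFunc.add ![t, s]⟩
instance : Mul (LS.Term α) := ⟨fun t s => Term.func LSFunc.mul ![t, s]⟩

def lt (t s : LS.Term α) : LS.Formula α := Relations.formula₂ LSRel.lt t s
def le (t s : LS.Term α) : LS.Formula α := ∼(lt s t)
def mem₁ (t : LS.Term α) : LS.Formula α := Relations.formula₁ LSRel.S1 t
def mem₂ (t : LS.Term α) : LS.Formula α := Relations.formula₁ LSRel.S2 t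

/-- `ex φ` and `all φ` bind the variable `none` of `φ`; the other variables are `some a`. -/
def ex (φ : LS.Formula (Option α)) : LS.Formula α :=
  Formula.iExs Unit (φ.relabel fun o => o.elim (Sum.inr ()) Sum.inl)

def all (φ : LS.Formula (Option α)) : LS.Formula α := ∼(ex ∼φ)

def bound : LS.Term (Option α) := Term.var none
def lift (t : LS.Term α) : LS.Term (Option α) := t.relabel some

section Holds

variable (A B : Set ℝ)

/-- `RealizesLS A B ψ x y` unfolds to `Holds A B ψ ![x, y]`. -/
def Holds (φ : LS.Formula α) (v : α → ℝ) : Prop := @Formula.Realize LS ℝ (lsStruct A B) α φ v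

def eval (v : α → ℝ) (t : LS.Term α) : ℝ := @Term.realize LS ℝ (lsStruct A B) α v t

variable {A B} (v : α → ℝ) (t s : LS.Term α) (φ ψ : LS.Formula α)

@[simp] theorem eval_var (a : α) : eval A B v (Term.var a) = v a := rfl
@[simp] theorem eval_zero : eval A B v 0 = 0 := rfl
@[simp] theorem eval_one : eval A B v 1 = 1 := rfl
@[simp] theorem eval_add : eval A B v (t + s) = eval A B v t + eval A B v s := rfl
@[simp] theorem eval_mul : eval A B v (t * s) = eval A B v t * eval A B v s := rfl
@[simp] theorem eval_bound (a : ℝ) : eval A B (·.elim a v) bound = a := rfl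

@[simp] theorem eval_lift (a : ℝ) : eval A B (·.elim a v) (lift t) = eval A B v t :=
  letI := lsStruct A B; Term.realize_relabel

@[simp] theorem holds_inf : Holds A B (φ ⊓ ψ) v ↔ Holds A B φ v ∧ Holds A B ψ v :=
  letI := lsStruct A B; Formula.realize_inf
@[simp] theorem holds_sup : Holds A B (φ ⊔ ψ) v ↔ Holds A B φ v ∨ Holds A B ψ v :=
  letI := lsStruct A B; Formula.realize_sup
@[simp] theorem holds_not : Holds A B (∼φ) v ↔ ¬Holds A B φ v :=
  letI := lsStruct A B; Formula.realize_not
@[simp] theorem holds_imp : Holds A B (φ.imp ψ) v ↔ (Holds A B φ v → Holds A B ψ v) :=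
  letI := lsStruct A B; Formula.realize_imp
@[simp] theorem holds_equal : Holds A B (t.equal s) v ↔ eval A B v t = eval A B v s :=
  letI := lsStruct A B; Formula.realize_equal
@[simp] theorem holds_lt : Holds A B (lt t s) v ↔ eval A B v t < eval A B v s :=
  letI := lsStruct A B; Formula.realize_rel₂
@[simp] theorem holds_le : Holds A B (le t s) v ↔ eval A B v t ≤ eval A B v s := by
  simp [le]
@[simp] theorem holds_mem₁ : Holds A B (mem₁ t) v ↔ eval A B v t ∈ A :=
  letI := lsStruct A B; Formula.realize_rel₁
@[simp] theorem holds_mem₂ : Holds A B (mem₂ t) v ↔ eval A B v t ∈ B :=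
  letI := lsStruct A B; Formula.realize_rel₁

@[simp] theorem holds_ex (φ : LS.Formula (Option α)) :
    Holds A B (ex φ) v ↔ ∃ a, Holds A B φ (·.elim a v) := by
  let := lsStruct A B
  have elim_comp (i : Unit → ℝ) :
      Sum.elim v i ∘ (fun o : Option α => o.elim (Sum.inr ()) Sum.inl) = (·.elim (i ()) v) := by
    funext o; cases o <;> rfl
  simp only [Holds, ex, Formula.realize_iExs, Formula.realize_relabel, elim_comp]
  exact ⟨fun ⟨i, h⟩ => ⟨i (), h⟩, fun ⟨a, h⟩ => ⟨fun _ => a, h⟩⟩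

@[simp] theorem holds_all (φ : LS.Formula (Option α)) :
    Holds A B (all φ) v ↔ ∀ a, Holds A B φ (·.elim a v) := by
  simp [all]

end Holds

/-- `u = compress s`, i.e. `(2u - 1)(1 + |s|) = s`, split on the sign of `s`. -/
def isCompress (s u : LS.Term α) : LS.Formula α :=
  (le 0 s ⊓ ((u + u) * (1 + s)).equal (1 + s + s)) ⊔ (lt s 0 ⊓ (u + u).equal (1 + (u + u) * s))

def inImage₁ (u : LS.Term α) : LS.Formula α := ex (mem₁ bound ⊓ isCompress bound (lift u))
def inImage₂ (u : LS.Term α) : LS.Formula α := ex (mem₂ bound ⊓ isCompress bound (lift u))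

def isBreakpoint (t : LS.Term α) : LS.Formula α :=
  t.equal 0 ⊔ (t.equal 1 ⊔ (inImage₁ t ⊔ inImage₂ t))

def gapFrom (a g : LS.Term α) : LS.Formula α :=
  ex (isBreakpoint bound ⊓ (lt (lift a) bound ⊓ bound.equal (lift a + lift g)))

def isGap (g : LS.Term α) : LS.Formula α := ex (isBreakpoint bound ⊓ gapFrom bound (lift g))

def gapsFromAtLeast (a g : LS.Term α) : LS.Formula α :=
  all (isBreakpoint bound ⟹ lt (lift a) bound ⟹ le (lift a + lift g) bound)

def isGapLowerBound (g : LS.Term α) : LS.Formula α :=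
  all (isBreakpoint bound ⟹ gapsFromAtLeast bound (lift g))

def isLeastGap (g : LS.Term α) : LS.Formula α := isGap g ⊓ isGapLowerBound g

def absSubLt (x u w : LS.Term α) : LS.Formula α := lt u (x + w) ⊓ lt x (u + w)

def absSubAddEq (x u s t : LS.Term α) : LS.Formula α :=
  (le u x ⊓ (x + s).equal (u + t)) ⊔ (le x u ⊓ (u + s).equal (x + t))

def nearCenter (x y w : LS.Term α) : LS.Formula α :=
  ex (absSubLt (lift x) bound (lift w) ⊓
    (inImage₁ bound ⊓ absSubAddEq (lift x) bound (lift y * (lift w * lift w)) (lift w) ⊔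
      inImage₂ bound ⊓ absSubAddEq (lift x) bound 0 (lift y * (lift w * lift w) + lift w)))

def farFromCenters (x y w : LS.Term α) : LS.Formula α :=
  y.equal 0 ⊓ all (inImage₁ bound ⊔ inImage₂ bound ⟹ ∼(absSubLt (lift x) bound (lift w)))

def graph : LS.Formula (Fin 2) :=
  ex (isLeastGap (bound + bound + bound) ⊓
    (nearCenter (lift (Term.var 0)) (lift (Term.var 1)) bound ⊔
      farFromCenters (lift (Term.var 0)) (lift (Term.var 1)) bound))

section GraphFormula

variable {A B : Set ℝ} (v : α → ℝ)

@[simp] theorem holds_isCompress (s u : LS.Term α) :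
    Holds A B (isCompress s u) v ↔ eval A B v u = compress (eval A B v s) := by
  simp only [isCompress, holds_sup, holds_inf, holds_le, holds_lt, holds_equal, eval_add,
    eval_mul, eval_zero, eval_one]
  generalize eval A B v s = s, eval A B v u = u
  rw [eq_compress_iff]
  rcases le_or_gt 0 s with hs | hs
  · simp only [abs_of_nonneg hs, hs, not_lt.2 hs, true_and, false_and, or_false]
    constructor <;> intro h <;> linarith
  · simp only [abs_of_neg hs, hs, not_le.2 hs, true_and, false_and, false_or]
    constructor <;> intro h <;> linarith

@[simp] theorem holds_inImage₁ (u : LS.Term α) :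
    Holds A B (inImage₁ u) v ↔ eval A B v u ∈ compress '' A := by
  simp [inImage₁, eq_comm]

@[simp] theorem holds_inImage₂ (u : LS.Term α) :
    Holds A B (inImage₂ u) v ↔ eval A B v u ∈ compress '' B := by
  simp [inImage₂, eq_comm]

@[simp] theorem holds_isBreakpoint (t : LS.Term α) :
    Holds A B (isBreakpoint t) v ↔ eval A B v t ∈ breakpoints A B := by
  simp [isBreakpoint, breakpoints]

@[simp] theorem holds_isGap (g : LS.Term α) :
    Holds A B (isGap g) v ↔ eval A B v g ∈ gapSet (breakpoints A B) := by
  simp [isGap, gapFrom, gapSet]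

@[simp] theorem holds_isGapLowerBound (g : LS.Term α) :
    Holds A B (isGapLowerBound g) v ↔ eval A B v g ∈ lowerBounds (gapSet (breakpoints A B)) := by
  simp only [isGapLowerBound, gapsFromAtLeast, holds_all, holds_imp, holds_isBreakpoint,
    holds_lt, holds_le, eval_add, eval_bound, eval_lift]
  constructor
  · rintro h _ ⟨a, ha, b, hb, hab, rfl⟩
    linarith [h a ha (a + _) hb hab]
  · intro h a ha b hb hab
    linarith [h ⟨a, ha, b, hb, hab, (add_sub_cancel a b).symm⟩]

@[simp] theorem holds_isLeastGap (g : LS.Term α) :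
    Holds A B (isLeastGap g) v ↔ IsLeast (gapSet (breakpoints A B)) (eval A B v g) := by
  simp [isLeastGap, IsLeast]

@[simp] theorem holds_absSubLt (x u w : LS.Term α) :
    Holds A B (absSubLt x u w) v ↔ |eval A B v x - eval A B v u| < eval A B v w := by
  simp only [absSubLt, holds_inf, holds_lt, eval_add, abs_sub_lt_iff]
  constructor <;> rintro ⟨h₁, h₂⟩ <;> constructor <;> linarith

@[simp] theorem holds_absSubAddEq (x u s t : LS.Term α) :
    Holds A B (absSubAddEq x u s t) v ↔
      |eval A B v x - eval A B v u| + eval A B v s = eval A B v t := by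
  simp only [absSubAddEq, holds_sup, holds_inf, holds_le, holds_equal, eval_add]
  generalize eval A B v x = x, eval A B v u = u, eval A B v s = s, eval A B v t = t
  rcases lt_trichotomy u x with h | rfl | h
  · simp only [abs_of_pos (sub_pos.2 h), h.le, not_le.2 h, true_and, false_and, or_false]
    constructor <;> intro h <;> linarith
  · simp
  · simp only [abs_of_neg (sub_neg.2 h), h.le, not_le.2 h, true_and, false_and, false_or]
    constructor <;> intro h <;> linarith

theorem holds_graph (x y : ℝ) :
    Holds A B graph ![x, y] ↔ ∃ w, IsLeast (gapSet (breakpoints A B)) (w + w + w) ∧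
      ((∃ u, |x - u| < w ∧ (u ∈ compress '' A ∧ |x - u| + y * (w * w) = w ∨
          u ∈ compress '' B ∧ |x - u| = y * (w * w) + w)) ∨
        y = 0 ∧ ∀ u, u ∈ compress '' A ∨ u ∈ compress '' B → ¬|x - u| < w) := by
  simp [graph, nearCenter, farFromCenters]

theorem holds_graph_iff_tentGraph {w x y : ℝ}
    (hw : IsLeast (gapSet (breakpoints A B)) (3 * w)) :
    Holds A B graph ![x, y] ↔ TentGraph (compress '' A) (compress '' B) w x y := by
  have hw₀ : 0 < w := by linarith [hw.pos_of_gapSet]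
  have hw' (w' : ℝ) : IsLeast (gapSet (breakpoints A B)) (w' + w' + w') ↔ w' = w :=
    ⟨fun h => by linarith [h.unique hw], fun h => by rwa [h, show w + w + w = 3 * w by ring]⟩
  simp only [holds_graph, hw', exists_eq_left, TentGraph, mem_union, not_lt]
  refine or_congr (exists_congr fun u => and_congr_right fun hu => ?_) Iff.rfl
  rw [tent_of_abs_le hu.le, neg_div', eq_div_iff (by positivity), eq_div_iff (by positivity)]
  refine or_congr (and_congr_right fun _ => ?_) (and_congr_right fun _ => ?_) <;>
    constructor <;> intro h <;> linarith

end GraphFormula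

end LS

end

/-- There is a first-order formula ψ(x,y) over L(S1,S2) defining, for every pair of
disjoint finite sets S1, S2 ⊆ ℝ, (the graph of) a continuous piecewise linear
function f with ∫₀¹ f = 0 iff |S1| = |S2|. -/
theorem pwl_graph_definable_card_test :
    ∃ ψ : LS.Formula (Fin 2), ∀ S1 S2 : Finset ℝ, Disjoint S1 S2 →
      ∃ f : ℝ → ℝ, IsPWL1 f ∧
        (∀ a b : ℝ, RealizesLS (↑S1) (↑S2) ψ a b ↔ f a = b) ∧
        ((∫ x in (0:ℝ)..1, f x) = 0 ↔ S1.card = S2.card) := by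
  refine ⟨LS.graph, fun S1 S2 hdisj => ?_⟩
  obtain ⟨w, hw⟩ := exists_isLeast_gapSet_breakpoints S1.finite_toSet S2.finite_toSet
  have hinj := strictMono_compress.injective
  have hU : (↑(S1.image compress ∪ S2.image compress) : Set ℝ) =
      compress '' ↑S1 ∪ compress '' ↑S2 := by
    push_cast; rfl
  refine ⟨signedTents (S1.image compress) (S2.image compress) w, isPWL1_signedTents _ _ _,
    fun x y => ?_, ?_⟩
  · rw [signedTents_eq_iff ((Finset.disjoint_image hinj).2 hdisj)
      (hU ▸ pairwise_of_isLeast_gapSet_breakpoints hw), Finset.coe_image, Finset.coe_image]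
    exact LS.holds_graph_iff_tentGraph hw
  · rw [integral_signedTents (by linarith [hw.pos_of_gapSet]) fun u hu =>
        sub_nonneg_and_add_le_one_of_isLeast_gapSet hw (hU ▸ hu),
      Finset.card_image_of_injective _ hinj, Finset.card_image_of_injective _ hinj, sub_eq_zero,
      Nat.cast_inj]
end

section
/- For every d ≥ 1 and every finite set A of affine hyperplanes in ℝ^d, there exists an affine cylindrical decomposition of ℝ^d that is compatible with A. -/
/-- The cylinder C × ℝ above a set C ⊆ ℝ^i. -/
def cylinder {i : ℕ} (C : Set (Fin i → ℝ)) : Set (Fin (i+1) → ℝ) :=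
  {x | Fin.init x ∈ C}

/-- The section of the cylinder above C given by the j-th section mapping. -/
def sectionCell {i r : ℕ} (C : Set (Fin i → ℝ)) (ξ : Fin r → ((Fin i → ℝ) →ᵃ[ℝ] ℝ))
    (j : Fin r) : Set (Fin (i+1) → ℝ) :=
  {x | Fin.init x ∈ C ∧ x (Fin.last i) = ξ j (Fin.init x)}

/-- The j-th sector of the cylinder above C: the set of points strictly above the
section mappings with index < j and strictly below those with index ≥ j.  For j = 0
this is the part below all sections, for j = r the part above all sections, and for
r = 0 it is the whole cylinder C × ℝ. -/
def sectorCell {i r : ℕ} (C : Set (Fin i → ℝ)) (ξ : Fin r → ((Fin i → ℝ) →ᵃ[ℝ] ℝ))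
    (j : Fin (r+1)) : Set (Fin (i+1) → ℝ) :=
  {x | Fin.init x ∈ C ∧ ∀ k : Fin r,
    (k.castSucc < j → ξ k (Fin.init x) < x (Fin.last i)) ∧
    (j ≤ k.castSucc → x (Fin.last i) < ξ k (Fin.init x))}

/-- An affine cylindrical decomposition of ℝ^d. -/
structure AffineCD (d : ℕ) where
  /-- The partition of ℝ^i, for each i ≤ d. -/
  cells : ∀ i : ℕ, Set (Set (Fin i → ℝ))
  finite : ∀ i, i ≤ d → (cells i).Finite
  level_zero : cells 0 = {Set.univ}
  nonempty : ∀ i, i ≤ d → ∀ C ∈ cells i, C.Nonempty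
  covers : ∀ i, i ≤ d → ⋃₀ cells i = Set.univ
  pairwise_disjoint : ∀ i, i ≤ d → ∀ C1 ∈ cells i, ∀ C2 ∈ cells i,
    C1 ≠ C2 → Disjoint C1 C2
  /-- Above each cell of level i there are finitely many ordered section mappings,
  and the cells of level i+1 are exactly the sections and sectors above the cells
  of level i. -/
  stack : ∀ i, i < d →
    ∃ (r : Set (Fin i → ℝ) → ℕ)
      (ξ : ∀ C : Set (Fin i → ℝ), Fin (r C) → ((Fin i → ℝ) →ᵃ[ℝ] ℝ)),
      (∀ C ∈ cells i, ∀ j k : Fin (r C), j < k → ∀ x ∈ C, ξ C j x < ξ C k x) ∧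
      cells (i+1) = ⋃ C ∈ cells i,
        (Set.range (sectionCell C (ξ C)) ∪ Set.range (sectorCell C (ξ C)))

/-- A cylindrical decomposition of ℝ^d is compatible with a finite set of affine
hyperplanes (each given by a defining affine function) if every defining function has
constant sign on every d-cell. -/
def CompatibleWith {d : ℕ} (cd : AffineCD d) (A : Finset ((Fin d → ℝ) →ᵃ[ℝ] ℝ)) : Prop :=
  ∀ h ∈ A, ∀ C ∈ cd.cells d,
    (∀ x ∈ C, h x = 0) ∨ (∀ x ∈ C, 0 < h x) ∨ (∀ x ∈ C, h x < 0)

/-!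
Write a point of `ℝ^(d+1)` as `(y, t)` and an affine `h` as `h(y, t) = h(y, 0) + c_h t`. Where
`c_h ≠ 0`, `h` has the sign of `c_h (t - ξ_h(y))` for an affine root map `ξ_h`. Project `A` to the
restrictions `h(y, 0)` and the differences `ξ_h - ξ_g`, and decompose `ℝ^d` by induction. On each
cell `C` of that decomposition every difference `ξ_h - ξ_g` has constant sign, so the order of the
roots at one sample point of `C` is their order on all of `C`: the distinct roots, sorted at the
sample point, are section mappings above `C`, and every `h` has constant sign on each of the
resulting sections and sectors.
-/

open Function Set

noncomputable section

variable {d : ℕ}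

def snocZero (d : ℕ) : (Fin d → ℝ) →ₗ[ℝ] Fin (d + 1) → ℝ where
  toFun y := Fin.snoc y 0
  map_add' y z := by ext i; induction i using Fin.lastCases <;> simp
  map_smul' c y := by ext i; induction i using Fin.lastCases <;> simp

namespace AffineMap

variable (h : (Fin (d + 1) → ℝ) →ᵃ[ℝ] ℝ)

def lastCoeff : ℝ := h.linear (Pi.single (Fin.last d) 1)

def restrictBase : (Fin d → ℝ) →ᵃ[ℝ] ℝ := h.comp (snocZero d).toAffineMap

def lastRoot : (Fin d → ℝ) →ᵃ[ℝ] ℝ := -h.lastCoeff⁻¹ • h.restrictBase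

theorem apply_eq_restrictBase_add (x : Fin (d + 1) → ℝ) :
    h x = h.restrictBase (Fin.init x) + h.lastCoeff * x (Fin.last d) := by
  have hx : x = x (Fin.last d) • (Pi.single (Fin.last d) 1 : Fin (d + 1) → ℝ) +ᵥ
      snocZero d (Fin.init x) := by
    ext i; induction i using Fin.lastCases <;> simp [snocZero, Fin.init]
  conv_lhs => rw [hx]
  rw [h.map_vadd, map_smul, vadd_eq_add, smul_eq_mul, add_comm, mul_comm]
  rfl

theorem apply_eq_lastCoeff_mul_sub_lastRoot (hc : h.lastCoeff ≠ 0) (x : Fin (d + 1) → ℝ) :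
    h x = h.lastCoeff * (x (Fin.last d) - h.lastRoot (Fin.init x)) := by
  rw [h.apply_eq_restrictBase_add, lastRoot, coe_smul, Pi.smul_apply, smul_eq_mul]
  field_simp
  ring

end AffineMap

def SignInvariantOn {α : Type*} (f : α → ℝ) (s : Set α) : Prop :=
  ∃ σ : SignType, ∀ x ∈ s, SignType.sign (f x) = σ

namespace SignInvariantOn

variable {α β : Type*} {f g : α → ℝ} {s : Set α}

theorem of_subsingleton (hs : s.Subsingleton) : SignInvariantOn f s := by
  rcases s.eq_empty_or_nonempty with rfl | ⟨x₀, hx₀⟩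
  · exact ⟨0, fun _ hx => hx.elim⟩
  · exact ⟨_, fun x hx => by rw [hs hx hx₀]⟩

theorem sign_eq (hf : SignInvariantOn f s) {x y : α} (hx : x ∈ s) (hy : y ∈ s) :
    SignType.sign (f x) = SignType.sign (f y) := by
  obtain ⟨σ, hσ⟩ := hf
  rw [hσ x hx, hσ y hy]

theorem congr (hf : SignInvariantOn f s) (hfg : EqOn f g s) : SignInvariantOn g s := by
  obtain ⟨σ, hσ⟩ := hf
  exact ⟨σ, fun x hx => hfg hx ▸ hσ x hx⟩

theorem const_mul (hf : SignInvariantOn f s) (c : ℝ) : SignInvariantOn (fun x => c * f x) s := by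
  obtain ⟨σ, hσ⟩ := hf
  exact ⟨SignType.sign c * σ, fun x hx => by rw [sign_mul, hσ x hx]⟩

theorem comp {f : β → ℝ} {t : Set β} (hf : SignInvariantOn f t) {g : α → β} (hg : MapsTo g s t) :
    SignInvariantOn (f ∘ g) s := by
  obtain ⟨σ, hσ⟩ := hf
  exact ⟨σ, fun x hx => hσ (g x) (hg hx)⟩

theorem trichotomy (hf : SignInvariantOn f s) :
    (∀ x ∈ s, f x = 0) ∨ (∀ x ∈ s, 0 < f x) ∨ (∀ x ∈ s, f x < 0) := by
  obtain ⟨σ, hσ⟩ := hf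
  rcases σ with _ | _ | _
  · exact .inl fun x hx => sign_eq_zero_iff.1 (hσ x hx)
  · exact .inr <| .inr fun x hx => sign_eq_neg_one_iff.1 (hσ x hx)
  · exact .inr <| .inl fun x hx => sign_eq_one_iff.1 (hσ x hx)

end SignInvariantOn

def stackCells {i r : ℕ} (C : Set (Fin i → ℝ)) (ξ : Fin r → (Fin i → ℝ) →ᵃ[ℝ] ℝ) :
    Set (Set (Fin (i + 1) → ℝ)) :=
  range (sectionCell C ξ) ∪ range (sectorCell C ξ)

section Stack

variable {i r : ℕ} {C : Set (Fin i → ℝ)} {ξ : Fin r → (Fin i → ℝ) →ᵃ[ℝ] ℝ}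

theorem subset_cylinder_of_mem_stackCells {D : Set (Fin (i + 1) → ℝ)} (hD : D ∈ stackCells C ξ) :
    D ⊆ cylinder C := by
  rcases hD with ⟨j, rfl⟩ | ⟨j, rfl⟩ <;> exact fun x hx => hx.1

theorem sectionCell_nonempty (hC : C.Nonempty) (j : Fin r) : (sectionCell C ξ j).Nonempty := by
  obtain ⟨y, hy⟩ := hC
  exact ⟨Fin.snoc y (ξ j y), by simpa [sectionCell] using hy⟩

theorem sectorCell_nonempty (hξ : ∀ y ∈ C, StrictMono (ξ · y)) (hC : C.Nonempty)
    (j : Fin (r + 1)) : (sectorCell C ξ j).Nonempty := by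
  obtain ⟨y, hy⟩ := hC
  obtain ⟨t, hbelow, habove⟩ := Finset.exists_between'
    ((Finset.univ.filter (·.castSucc < j)).image (ξ · y))
    ((Finset.univ.filter (j ≤ ·.castSucc)).image (ξ · y))
    (by simpa using fun k hk l hl => hξ y hy (Fin.castSucc_lt_castSucc_iff.1 (hk.trans_le hl)))
  refine ⟨Fin.snoc y t, by simpa using hy, fun k => ?_⟩
  simp only [Fin.init_snoc, Fin.snoc_last]
  exact ⟨fun hk => hbelow _ (by simpa using ⟨k, hk, rfl⟩),
    fun hk => habove _ (by simpa using ⟨k, hk, rfl⟩)⟩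

theorem nonempty_of_mem_stackCells (hξ : ∀ y ∈ C, StrictMono (ξ · y)) (hC : C.Nonempty)
    {D : Set (Fin (i + 1) → ℝ)} (hD : D ∈ stackCells C ξ) : D.Nonempty := by
  rcases hD with ⟨j, rfl⟩ | ⟨j, rfl⟩
  · exact sectionCell_nonempty hC j
  · exact sectorCell_nonempty hξ hC j

/-- The sector containing a point off all sections is indexed by the number of sections below
it. -/
theorem exists_mem_stackCells (hξ : ∀ y ∈ C, StrictMono (ξ · y)) {x : Fin (i + 1) → ℝ}
    (hx : x ∈ cylinder C) : ∃ D ∈ stackCells C ξ, x ∈ D := by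
  set y := Fin.init x
  set t := x (Fin.last i)
  by_cases hsec : ∃ j, t = ξ j y
  · obtain ⟨j, hj⟩ := hsec
    exact ⟨_, .inl ⟨j, rfl⟩, hx, hj⟩
  simp only [not_exists] at hsec
  set below := Finset.univ.filter (ξ · y < t)
  refine ⟨_, .inr ⟨⟨below.card, Nat.lt_succ_of_le (card_finset_fin_le below)⟩, rfl⟩, hx,
    fun k => ⟨fun hk => ?_, fun hk => ?_⟩⟩
  · by_contra hkt
    have hsub : below ⊆ Finset.Iio k := fun l hl => by
      have hl : ξ l y < t := (Finset.mem_filter.1 hl).2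
      exact Finset.mem_Iio.2 ((hξ y hx).lt_iff_lt.1 (hl.trans_le (not_lt.1 hkt)))
    have := Finset.card_le_card hsub
    rw [Fin.card_Iio] at this
    exact absurd hk (not_lt.2 (Fin.le_def.2 this))
  · refine (lt_or_gt_of_ne (hsec k)).resolve_right fun hkt => ?_
    have hsub : Finset.Iic k ⊆ below := fun l hl =>
      Finset.mem_filter.2 ⟨Finset.mem_univ l,
        ((hξ y hx).monotone (Finset.mem_Iic.1 hl)).trans_lt hkt⟩
    have := Finset.card_le_card hsub
    rw [Fin.card_Iic] at this
    exact absurd hk (not_le.2 (Fin.lt_def.2 this))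

theorem sUnion_stackCells (hξ : ∀ y ∈ C, StrictMono (ξ · y)) :
    ⋃₀ stackCells C ξ = cylinder C :=
  (sUnion_subset fun _ => subset_cylinder_of_mem_stackCells).antisymm fun _ hx =>
    mem_sUnion.2 (exists_mem_stackCells hξ hx)

theorem disjoint_sectionCell_sectorCell (j : Fin r) (k : Fin (r + 1)) :
    Disjoint (sectionCell C ξ j) (sectorCell C ξ k) := by
  refine Set.disjoint_left.2 fun x ⟨_, hxj⟩ ⟨_, hxk⟩ => ?_
  rcases lt_or_ge j.castSucc k with hjk | hjk
  · exact (hxk j).1 hjk |>.ne hxj.symm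
  · exact (hxk j).2 hjk |>.ne hxj

theorem disjoint_sectionCell (hξ : ∀ y ∈ C, StrictMono (ξ · y)) {j k : Fin r} (hjk : j ≠ k) :
    Disjoint (sectionCell C ξ j) (sectionCell C ξ k) :=
  Set.disjoint_left.2 fun _ ⟨hx, hxj⟩ ⟨_, hxk⟩ => hjk ((hξ _ hx).injective (hxj.symm.trans hxk))

theorem disjoint_sectorCell {j k : Fin (r + 1)} (hjk : j ≠ k) :
    Disjoint (sectorCell C ξ j) (sectorCell C ξ k) := by
  wlog hlt : j < k generalizing j k
  · exact (this hjk.symm ((Ne.le_iff_lt hjk.symm).1 (not_lt.1 hlt))).symm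
  refine Set.disjoint_left.2 fun x ⟨_, hxj⟩ ⟨_, hxk⟩ => ?_
  set l := j.castPred (Fin.ne_last_of_lt hlt)
  have hl : l.castSucc = j := Fin.castSucc_castPred _ _
  exact ((hxj l).2 hl.ge).not_gt ((hxk l).1 (hl ▸ hlt))

theorem pairwiseDisjoint_stackCells (hξ : ∀ y ∈ C, StrictMono (ξ · y)) :
    (stackCells C ξ).PairwiseDisjoint id := by
  rintro _ (⟨j, rfl⟩ | ⟨j, rfl⟩) _ (⟨k, rfl⟩ | ⟨k, rfl⟩) hne
  · exact disjoint_sectionCell hξ fun hjk => hne (hjk ▸ rfl)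
  · exact disjoint_sectionCell_sectorCell j k
  · exact (disjoint_sectionCell_sectorCell k j).symm
  · exact disjoint_sectorCell fun hjk => hne (hjk ▸ rfl)

theorem signInvariantOn_last_sub_of_mem_stackCells (hξ : ∀ y ∈ C, StrictMono (ξ · y)) (m : Fin r)
    {D : Set (Fin (i + 1) → ℝ)} (hD : D ∈ stackCells C ξ) :
    SignInvariantOn (fun x => x (Fin.last i) - ξ m (Fin.init x)) D := by
  rcases hD with ⟨j, rfl⟩ | ⟨j, rfl⟩
  · rcases lt_trichotomy j m with hjm | rfl | hjm
    · exact ⟨-1, fun x ⟨hx, hxj⟩ => by dsimp only; rw [hxj, sign_neg (sub_neg.2 (hξ _ hx hjm))]⟩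
    · exact ⟨0, fun x ⟨_, hxj⟩ => by dsimp only; rw [hxj, sub_self, sign_zero]⟩
    · exact ⟨1, fun x ⟨hx, hxj⟩ => by dsimp only; rw [hxj, sign_pos (sub_pos.2 (hξ _ hx hjm))]⟩
  · by_cases hmj : m.castSucc < j
    · exact ⟨1, fun x ⟨_, hx⟩ => sign_pos (sub_pos.2 ((hx m).1 hmj))⟩
    · exact ⟨-1, fun x ⟨_, hx⟩ => sign_neg (sub_neg.2 ((hx m).2 (not_lt.1 hmj)))⟩

end Stack

namespace AffineCD

def zero : AffineCD 0 where
  cells _ := {univ}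
  finite _ _ := finite_singleton _
  level_zero := rfl
  nonempty _ _ _ hC := hC ▸ univ_nonempty
  covers _ _ := sUnion_singleton _
  pairwise_disjoint _ _ _ h₁ _ h₂ hne := absurd (h₁.trans h₂.symm) hne
  stack _ hi := absurd hi (Nat.not_lt_zero _)

variable (cd : AffineCD d) {r : Set (Fin d → ℝ) → ℕ}
  (ξ : ∀ C : Set (Fin d → ℝ), Fin (r C) → (Fin d → ℝ) →ᵃ[ℝ] ℝ)

def nextCells : Set (Set (Fin (d + 1) → ℝ)) :=
  ⋃ C ∈ cd.cells d, stackCells C (ξ C)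

variable {ξ} (hξ : ∀ C ∈ cd.cells d, ∀ y ∈ C, StrictMono (ξ C · y))
include hξ

theorem nextCells_nonempty {D : Set (Fin (d + 1) → ℝ)} (hD : D ∈ cd.nextCells ξ) :
    D.Nonempty := by
  obtain ⟨C, hC, hD⟩ := mem_iUnion₂.1 hD
  exact nonempty_of_mem_stackCells (hξ C hC) (cd.nonempty d le_rfl C hC) hD

theorem sUnion_nextCells : ⋃₀ cd.nextCells ξ = univ := by
  refine eq_univ_of_forall fun x => ?_
  obtain ⟨C, hC, hx⟩ := mem_sUnion.1 (cd.covers d le_rfl ▸ mem_univ (Fin.init x))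
  obtain ⟨D, hD, hxD⟩ := exists_mem_stackCells (hξ C hC) (x := x) hx
  exact ⟨D, mem_iUnion₂.2 ⟨C, hC, hD⟩, hxD⟩

theorem pairwiseDisjoint_nextCells : (cd.nextCells ξ).PairwiseDisjoint id := by
  refine PairwiseDisjoint.biUnion (fun C₁ hC₁ C₂ hC₂ hne => ?_) fun C hC =>
    pairwiseDisjoint_stackCells (hξ C hC)
  have hcyl (C : Set (Fin d → ℝ)) : ⨆ D ∈ stackCells C (ξ C), id D ⊆ cylinder C :=
    iSup₂_le fun _ => subset_cylinder_of_mem_stackCells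
  exact ((cd.pairwise_disjoint d le_rfl C₁ hC₁ C₂ hC₂ hne).preimage Fin.init).mono
    (hcyl C₁) (hcyl C₂)

def snoc : AffineCD (d + 1) where
  cells := update cd.cells (d + 1) (cd.nextCells ξ)
  finite i hi := by
    rcases eq_or_ne i (d + 1) with rfl | hne
    · rw [update_self]
      exact (cd.finite d le_rfl).biUnion fun _ _ => (finite_range _).union (finite_range _)
    · rw [update_of_ne hne]
      exact cd.finite i (by omega)
  level_zero := by rw [update_of_ne (Nat.succ_ne_zero d).symm, cd.level_zero]
  nonempty i hi := by
    rcases eq_or_ne i (d + 1) with rfl | hne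
    · rw [update_self]
      exact fun _ => cd.nextCells_nonempty hξ
    · rw [update_of_ne hne]
      exact cd.nonempty i (by omega)
  covers i hi := by
    rcases eq_or_ne i (d + 1) with rfl | hne
    · rw [update_self, cd.sUnion_nextCells hξ]
    · rw [update_of_ne hne, cd.covers i (by omega)]
  pairwise_disjoint i hi := by
    rcases eq_or_ne i (d + 1) with rfl | hne
    · rw [update_self]
      exact cd.pairwiseDisjoint_nextCells hξ
    · rw [update_of_ne hne]
      exact cd.pairwise_disjoint i (by omega)
  stack i hi := by
    rcases eq_or_ne i d with rfl | hne
    · rw [update_self, update_of_ne (Nat.succ_ne_self i).symm]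
      exact ⟨r, ξ, fun C hC j k hjk y hy => hξ C hC y hy hjk, rfl⟩
    · rw [update_of_ne (by omega), update_of_ne (by omega)]
      exact cd.stack i (by omega)

theorem snoc_cells_last : (cd.snoc hξ).cells (d + 1) = cd.nextCells ξ :=
  update_self ..

end AffineCD

section Projection

open scoped Classical

variable (A : Finset ((Fin (d + 1) → ℝ) →ᵃ[ℝ] ℝ))

def rootMaps : Finset ((Fin d → ℝ) →ᵃ[ℝ] ℝ) :=
  (A.filter (·.lastCoeff ≠ 0)).image AffineMap.lastRoot

def projection : Finset ((Fin d → ℝ) →ᵃ[ℝ] ℝ) :=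
  A.image AffineMap.restrictBase ∪ Finset.image₂ (· - ·) (rootMaps A) (rootMaps A)

def rootValues (p : Fin d → ℝ) : Finset ℝ := (rootMaps A).image (· p)

theorem exists_mem_rootMaps_apply_eq (p : Fin d → ℝ) (j : Fin (rootValues A p).card) :
    ∃ η ∈ rootMaps A, η p = (rootValues A p).orderEmbOfFin rfl j :=
  Finset.mem_image.1 (Finset.orderEmbOfFin_mem _ _ _)

/-- The distinct root maps, listed in increasing order of their values at `p`. -/
def sectionMaps (p : Fin d → ℝ) (j : Fin (rootValues A p).card) : (Fin d → ℝ) →ᵃ[ℝ] ℝ :=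
  (exists_mem_rootMaps_apply_eq A p j).choose

theorem sectionMaps_mem (p : Fin d → ℝ) (j : Fin (rootValues A p).card) :
    sectionMaps A p j ∈ rootMaps A :=
  (exists_mem_rootMaps_apply_eq A p j).choose_spec.1

theorem sectionMaps_apply (p : Fin d → ℝ) (j : Fin (rootValues A p).card) :
    sectionMaps A p j p = (rootValues A p).orderEmbOfFin rfl j :=
  (exists_mem_rootMaps_apply_eq A p j).choose_spec.2

variable {A} {C : Set (Fin d → ℝ)} {p : Fin d → ℝ} (hp : p ∈ C)
  (hA : ∀ g ∈ projection A, SignInvariantOn g C)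
include hp hA

theorem sign_sub_apply_eq_of_mem_rootMaps {η η' : (Fin d → ℝ) →ᵃ[ℝ] ℝ} (hη : η ∈ rootMaps A)
    (hη' : η' ∈ rootMaps A) {x : Fin d → ℝ} (hx : x ∈ C) :
    SignType.sign (η x - η' x) = SignType.sign (η p - η' p) :=
  (hA _ (Finset.mem_union_right _ (Finset.mem_image₂_of_mem hη hη'))).sign_eq hx hp

theorem sectionMaps_strictMono {x : Fin d → ℝ} (hx : x ∈ C) : StrictMono (sectionMaps A p · x) := by
  intro j k hjk
  have hsign := sign_sub_apply_eq_of_mem_rootMaps hp hA (sectionMaps_mem A p j)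
    (sectionMaps_mem A p k) hx
  rw [sectionMaps_apply, sectionMaps_apply,
    sign_neg (sub_neg.2 ((Finset.orderEmbOfFin _ _).strictMono hjk))] at hsign
  exact sub_neg.1 (sign_eq_neg_one_iff.1 hsign)

theorem exists_eqOn_sectionMaps {η : (Fin d → ℝ) →ᵃ[ℝ] ℝ} (hη : η ∈ rootMaps A) :
    ∃ m, EqOn η (sectionMaps A p m) C := by
  obtain ⟨m, hm⟩ : η p ∈ range ((rootValues A p).orderEmbOfFin rfl) := by
    rw [Finset.range_orderEmbOfFin]
    exact Finset.mem_image_of_mem _ hη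
  refine ⟨m, fun x hx => sub_eq_zero.1 (sign_eq_zero_iff.1 ?_)⟩
  rw [sign_sub_apply_eq_of_mem_rootMaps hp hA hη (sectionMaps_mem A p m) hx, sectionMaps_apply,
    hm, sub_self, sign_zero]

theorem signInvariantOn_of_mem_stackCells {h : (Fin (d + 1) → ℝ) →ᵃ[ℝ] ℝ} (hh : h ∈ A)
    {D : Set (Fin (d + 1) → ℝ)} (hD : D ∈ stackCells C (sectionMaps A p)) :
    SignInvariantOn h D := by
  by_cases hc : h.lastCoeff = 0
  · refine ((hA _ (Finset.mem_union_left _ (Finset.mem_image_of_mem _ hh))).comp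
      (subset_cylinder_of_mem_stackCells hD)).congr fun x _ => ?_
    simp [h.apply_eq_restrictBase_add x, hc]
  · obtain ⟨m, hm⟩ := exists_eqOn_sectionMaps hp hA
      (Finset.mem_image_of_mem _ (Finset.mem_filter.2 ⟨hh, hc⟩))
    refine ((signInvariantOn_last_sub_of_mem_stackCells
      (fun y hy => sectionMaps_strictMono hp hA hy) m hD).const_mul h.lastCoeff).congr
      fun x hx => ?_
    rw [h.apply_eq_lastCoeff_mul_sub_lastRoot hc, hm (subset_cylinder_of_mem_stackCells hD hx)]

end Projection

theorem exists_affineCD_succ (A : Finset ((Fin (d + 1) → ℝ) →ᵃ[ℝ] ℝ)) (cd : AffineCD d)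
    (hcd : ∀ g ∈ projection A, ∀ C ∈ cd.cells d, SignInvariantOn g C) :
    ∃ cd' : AffineCD (d + 1), ∀ h ∈ A, ∀ D ∈ cd'.cells (d + 1), SignInvariantOn h D := by
  let pt (C : Set (Fin d → ℝ)) : Fin d → ℝ := Classical.epsilon (· ∈ C)
  have hpt (C) (hC : C ∈ cd.cells d) : pt C ∈ C :=
    Classical.epsilon_spec (cd.nonempty d le_rfl C hC)
  have hξ (C) (hC : C ∈ cd.cells d) (y) (hy : y ∈ C) : StrictMono (sectionMaps A (pt C) · y) :=
    sectionMaps_strictMono (hpt C hC) (fun g hg => hcd g hg C hC) hy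
  refine ⟨cd.snoc hξ, fun h hh D hD => ?_⟩
  rw [AffineCD.snoc_cells_last] at hD
  obtain ⟨C, hC, hD⟩ := mem_iUnion₂.1 hD
  exact signInvariantOn_of_mem_stackCells (hpt C hC) (fun g hg => hcd g hg C hC) hh hD

theorem exists_affineCD_signInvariantOn :
    ∀ (d : ℕ) (A : Finset ((Fin d → ℝ) →ᵃ[ℝ] ℝ)),
      ∃ cd : AffineCD d, ∀ h ∈ A, ∀ C ∈ cd.cells d, SignInvariantOn h C
  | 0, _ => ⟨AffineCD.zero, fun _ _ _ _ => .of_subsingleton subsingleton_of_subsingleton⟩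
  | d + 1, A =>
    have ⟨cd, hcd⟩ := exists_affineCD_signInvariantOn d (projection A)
    exists_affineCD_succ A cd hcd

end

theorem exists_affineCD_compatible_general (d : ℕ)
    (A : Finset ((Fin d → ℝ) →ᵃ[ℝ] ℝ)) :
    ∃ cd : AffineCD d, CompatibleWith cd A := by
  obtain ⟨cd, hcd⟩ := exists_affineCD_signInvariantOn d A
  exact ⟨cd, fun h hh C hC => (hcd h hh C hC).trichotomy⟩

/-- For every d ≥ 1 and every finite set of affine hyperplanes in ℝ^d (each given by a
defining non-constant affine function), there exists an affine cylindrical decomposition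
of ℝ^d compatible with it. -/
theorem exists_affineCD_compatible (d : ℕ) (hd : 1 ≤ d)
    (A : Finset ((Fin d → ℝ) →ᵃ[ℝ] ℝ))
    (hA : ∀ h ∈ A, ¬ ∃ c : ℝ, ∀ x, h x = c) :
    ∃ cd : AffineCD d, CompatibleWith cd A :=
  exists_affineCD_compatible_general d A
end

section
/- Let i ≥ 1, let A be a finite set of non-vertical affine hyperplanes in ℝ^i with associated section functions ξ_h : ℝ^{i-1} → ℝ, and let A' be a finite set of affine hyperplanes in ℝ^{i-1} such that for all h1, h2 ∈ A, if the affine function ξ_{h1} − ξ_{h2} is non-constant then the hyperplane {x ∈ ℝ^{i-1} : ξ_{h1}(x) = ξ_{h2}(x)} belongs to A'. Let D_0, …, D_{i-1} be an affine cylindrical decomposition of ℝ^{i-1} compatible with A'. Then for every cell C ∈ D_{i-1} and all h1, h2 ∈ A, one of the following holds: ξ_{h1}(x) < ξ_{h2}(x) for all x ∈ C, or ξ_{h1}(x) = ξ_{h2}(x) for all x ∈ C, or ξ_{h1}(x) > ξ_{h2}(x) for all x ∈ C. In particular, the hyperplanes of A determine a totally ordered sequence of section mappings above each cell of D_{i-1}.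 -/
/-- Auxiliary: if `h` has the same zero set as `ξ1 - ξ2`, and `h x`, `h y` have the
same strict sign, then `ξ1 - ξ2` cannot change sign between `x` and `y`. -/
lemma aux_no_sign_change {m : ℕ} (h ξ1 ξ2 : (Fin m → ℝ) →ᵃ[ℝ] ℝ)
    (hz : ∀ z, h z = 0 ↔ ξ1 z = ξ2 z) (x y : Fin m → ℝ)
    (hsign : 0 < h x * h y) (hgx : 0 < ξ1 x - ξ2 x) (hgy : ξ1 y - ξ2 y < 0) : False := by
  set gx := ξ1 x - ξ2 x with hgxd
  set gy := ξ1 y - ξ2 y with hgyd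
  have hden : 0 < gx - gy := by linarith
  set t : ℝ := gx / (gx - gy) with ht
  have ht0 : 0 < t := div_pos hgx hden
  have ht1 : t < 1 := by
    rw [ht, div_lt_one hden]; linarith
  set z := AffineMap.lineMap x y t with hzdef
  have hev : ∀ f : (Fin m → ℝ) →ᵃ[ℝ] ℝ, f z = f x + t * (f y - f x) := by
    intro f
    rw [hzdef, AffineMap.apply_lineMap]
    simp [AffineMap.lineMap_apply, smul_eq_mul]
    ring
  have hgz : ξ1 z = ξ2 z := by
    have h1 := hev ξ1
    have h2 := hev ξ2
    have : t * (gx - gy) = gx := by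
      rw [ht]; field_simp
    have := this
    rw [hgxd, hgyd] at this
    linarith [h1, h2, this]
  have hhz : h z = 0 := (hz z).2 hgz
  rw [hev h] at hhz
  have key : h x * (h x + t * (h y - h x)) = 0 := by rw [hhz]; ring
  nlinarith [key, mul_pos ht0 hsign, mul_nonneg (by linarith : (0:ℝ) ≤ 1 - t)
    (mul_self_nonneg (h x))]

/-- Let S be the set of section functions of a finite set of non-vertical affine
hyperplanes in ℝ^{m+1}, and let A' be a finite set of affine hyperplanes in ℝ^m
containing, for all ξ1, ξ2 ∈ S with ξ1 − ξ2 non-constant, the hyperplane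
{x : ξ1 x = ξ2 x}.  If an affine CD of ℝ^m is compatible with A', then above each of
its cells the section functions in S are totally ordered: any two compare the same way
everywhere on the cell. -/
theorem sections_totally_ordered_above_cells (m : ℕ)
    (S : Finset ((Fin m → ℝ) →ᵃ[ℝ] ℝ))
    (A' : Finset ((Fin m → ℝ) →ᵃ[ℝ] ℝ))
    (hA' : ∀ h ∈ A', ¬ ∃ c : ℝ, ∀ x, h x = c)
    (hproj : ∀ ξ1 ∈ S, ∀ ξ2 ∈ S, (¬ ∃ c : ℝ, ∀ x, ξ1 x - ξ2 x = c) →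
      ∃ h ∈ A', {x : Fin m → ℝ | h x = 0} = {x : Fin m → ℝ | ξ1 x = ξ2 x})
    (cd : AffineCD m) (hcomp : CompatibleWith cd A') :
    ∀ C ∈ cd.cells m, ∀ ξ1 ∈ S, ∀ ξ2 ∈ S,
      (∀ x ∈ C, ξ1 x < ξ2 x) ∨ (∀ x ∈ C, ξ1 x = ξ2 x) ∨ (∀ x ∈ C, ξ2 x < ξ1 x) := by
  intro C hC ξ1 hξ1 ξ2 hξ2
  by_cases hconst : ∃ c : ℝ, ∀ x, ξ1 x - ξ2 x = c
  · obtain ⟨c, hc⟩ := hconst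
    rcases lt_trichotomy c 0 with h | h | h
    · left; intro x _; have := hc x; linarith
    · right; left; intro x _; have := hc x; linarith
    · right; right; intro x _; have := hc x; linarith
  · obtain ⟨h, hhA', hset⟩ := hproj ξ1 hξ1 ξ2 hξ2 hconst
    have hz : ∀ z, h z = 0 ↔ ξ1 z = ξ2 z := by
      intro z
      constructor <;> intro hx
      · exact (Set.ext_iff.1 hset z).1 hx
      · exact (Set.ext_iff.1 hset z).2 hx
    rcases hcomp h hhA' C hC with hc0 | hcpos | hcneg
    · right; left; intro x hx; exact (hz x).1 (hc0 x hx)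
    all_goals {
      have hne : ∀ x ∈ C, ξ1 x ≠ ξ2 x := by
        intro x hx hxeq
        have := (hz x).2 hxeq
        first
          | (have := hcpos x hx; linarith)
          | (have := hcneg x hx; linarith)
      have hsign : ∀ x ∈ C, ∀ y ∈ C, 0 < h x * h y := by
        intro x hx y hy
        first
          | exact mul_pos (hcpos x hx) (hcpos y hy)
          | exact mul_pos_of_neg_of_neg (hcneg x hx) (hcneg y hy)
      obtain ⟨x0, hx0⟩ := cd.nonempty m le_rfl C hC
      rcases lt_or_gt_of_ne (hne x0 hx0) with hlt | hgt
      · left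
        intro x hx
        rcases lt_or_gt_of_ne (hne x hx) with hlt' | hgt'
        · exact hlt'
        · exact absurd (aux_no_sign_change h ξ1 ξ2 hz x x0 (hsign x hx x0 hx0)
            (by linarith) (by linarith)) not_false
      · right; right
        intro x hx
        rcases lt_or_gt_of_ne (hne x hx) with hlt' | hgt'
        · exact absurd (aux_no_sign_change h ξ1 ξ2 hz x0 x (hsign x0 hx0 x hx)
            (by linarith) (by linarith)) not_false
        · exact hgt'
    }
end

section
/- Let f : ℝ → ℝ be continuous, let T ⊆ ℝ be a finite set such that f is affine on each connected component of ℝ \ T, and let L be a finite set of affine functions ℝ → ℝ such that for every x ∈ ℝ there is ℓ ∈ L with f(x) = ℓ(x). Let d ≥ 2 and 1 ≤ i < j ≤ d, and let C ⊆ ℝ^d be a set such that: (a) for every t ∈ T, the function x ↦ x_i − t has constant sign on C (everywhere negative, everywhere zero, or everywhere positive), and (b) for every ℓ ∈ L, the function x ↦ x_j − ℓ(x_i) has constant sign on C. Then the truth value of the condition f(x_i) = x_j is constant on C: either f(x_i) = x_j for all x ∈ C, or f(x_i) ≠ x_j for all x ∈ C. -/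
/-- g has constant sign on C: everywhere negative, everywhere zero, or everywhere
positive on C. -/
def ConstSign {α : Type*} (C : Set α) (g : α → ℝ) : Prop :=
  (∀ x ∈ C, g x < 0) ∨ (∀ x ∈ C, g x = 0) ∨ (∀ x ∈ C, 0 < g x)

/-- If f is continuous and affine on each connected component of ℝ \ T, every value of
f is given by some affine function in the finite set L, and on C ⊆ ℝ^d each of the
functions x ↦ xᵢ − t (t ∈ T) and x ↦ x_j − ℓ(xᵢ) (ℓ ∈ L) has constant sign, then the
truth value of "f(xᵢ) = x_j" is constant on C. -/
theorem condition_constant_on_cell (f : ℝ → ℝ) (hf : Continuous f) (T : Finset ℝ)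
    (haff : ∀ x : ℝ, x ∉ (T : Set ℝ) → ∃ a b : ℝ,
      ∀ y ∈ connectedComponentIn ((T : Set ℝ))ᶜ x, f y = a * y + b)
    (L : Finset (ℝ →ᵃ[ℝ] ℝ)) (hL : ∀ x : ℝ, ∃ ℓ ∈ L, f x = ℓ x)
    (d : ℕ) (hd : 2 ≤ d) (i j : Fin d) (hij : i < j)
    (C : Set (Fin d → ℝ))
    (ha : ∀ t ∈ T, ConstSign C (fun x => x i - t))
    (hb : ∀ ℓ ∈ L, ConstSign C (fun x => x j - ℓ (x i))) :
    (∀ x ∈ C, f (x i) = x j) ∨ (∀ x ∈ C, f (x i) ≠ x j) := by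
  have zero_all : ∀ g : (Fin d → ℝ) → ℝ, ConstSign C g →
      ∀ x ∈ C, g x = 0 → ∀ y ∈ C, g y = 0 := by
    rintro g (h | h | h) x hx hgx y hy
    · exact absurd (h x hx) (by rw [hgx]; exact lt_irrefl 0)
    · exact h y hy
    · exact absurd (h x hx) (by rw [hgx]; exact lt_irrefl 0)
  have lform : ∀ ℓ : ℝ →ᵃ[ℝ] ℝ, ∀ z : ℝ, ℓ z = (ℓ 1 - ℓ 0) * z + ℓ 0 := by
    intro ℓ z
    have h1 : ℓ z = ℓ.linear z + ℓ 0 := by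
      have := ℓ.map_vadd (0 : ℝ) z
      simpa using this
    have h2 : ℓ 1 = ℓ.linear 1 + ℓ 0 := by
      have := ℓ.map_vadd (0 : ℝ) 1
      simpa using this
    have h3 : ℓ.linear z = z * ℓ.linear 1 := by
      have := ℓ.linear.map_smul z 1
      simpa [smul_eq_mul] using this
    rw [h1, h3]
    rw [show ℓ.linear 1 = ℓ 1 - ℓ 0 by linarith]
    ring
  have key : ∀ x ∈ C, ∀ y ∈ C, f (x i) = x j → f (y i) = y j := by
    intro x hx y hy hfx
    by_cases hxy : x i = y i
    · obtain ⟨ℓ, hℓL, hℓ⟩ := hL (x i)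
      have h0 : x j - ℓ (x i) = 0 := by rw [← hfx, hℓ]; ring
      have h0y := zero_all _ (hb ℓ hℓL) x hx h0 y hy
      have : y j = ℓ (y i) := by linarith
      rw [this, ← hxy, ← hℓ, hxy]
    · have hnotT : ∀ z ∈ Set.uIcc (x i) (y i), z ∉ (T : Set ℝ) := by
        intro z hz hzT
        rcases ha z hzT with h | h | h
        · have h1 := h x hx; have h2 := h y hy
          simp only at h1 h2
          rcases Set.mem_uIcc.mp hz with ⟨h3, h4⟩ | ⟨h3, h4⟩ <;> linarith
        · have h1 := h x hx; have h2 := h y hy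
          simp only at h1 h2
          exact hxy (by linarith)
        · have h1 := h x hx; have h2 := h y hy
          simp only at h1 h2
          rcases Set.mem_uIcc.mp hz with ⟨h3, h4⟩ | ⟨h3, h4⟩ <;> linarith
      have hsub : Set.uIcc (x i) (y i) ⊆ connectedComponentIn ((T : Set ℝ))ᶜ (x i) :=
        IsPreconnected.subset_connectedComponentIn isPreconnected_uIcc
          Set.left_mem_uIcc hnotT
      obtain ⟨a, b, hab⟩ := haff (x i) (hnotT _ Set.left_mem_uIcc)
      have hinf : (Set.uIcc (x i) (y i)).Infinite :=
        Set.Icc_infinite (inf_lt_sup.mpr hxy)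
      have hpigeon : ∃ ℓ ∈ L, ∃ p ∈ Set.uIcc (x i) (y i), ∃ q ∈ Set.uIcc (x i) (y i),
          p ≠ q ∧ f p = ℓ p ∧ f q = ℓ q := by
        haveI : Infinite (Set.uIcc (x i) (y i)) := hinf.to_subtype
        let F : Set.uIcc (x i) (y i) → L := fun z => ⟨(hL z).choose, (hL z).choose_spec.1⟩
        obtain ⟨p, q, hpq, hF⟩ := Finite.exists_ne_map_eq_of_infinite F
        refine ⟨(hL (p : ℝ)).choose, (hL (p : ℝ)).choose_spec.1, p, p.2, q, q.2,
          fun h => hpq (Subtype.ext h), (hL (p : ℝ)).choose_spec.2, ?_⟩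
        have : ((hL (p : ℝ)).choose : ℝ →ᵃ[ℝ] ℝ) = (hL (q : ℝ)).choose :=
          congrArg Subtype.val hF
        rw [this]
        exact (hL (q : ℝ)).choose_spec.2
      obtain ⟨ℓ, hℓL, p, hp, q, hq, hpq, hfp, hfq⟩ := hpigeon
      set c := ℓ 1 - ℓ 0 with hc
      set e := ℓ 0 with he
      have eq1 : a * p + b = c * p + e := by
        rw [← hab p (hsub hp), hfp, lform]
      have eq2 : a * q + b = c * q + e := by
        rw [← hab q (hsub hq), hfq, lform]
      have hac : a = c := by
        have h0 : (a - c) * (p - q) = 0 := by linear_combination eq1 - eq2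
        rcases mul_eq_zero.mp h0 with h | h
        · linarith
        · exact absurd (by linarith : p = q) hpq
      have hbe : b = e := by rw [hac] at eq1; linarith
      have hℓeq : ∀ z : ℝ, ℓ z = a * z + b := by
        intro z; rw [lform, ← hc, ← he, hac, hbe]
      have h0 : x j - ℓ (x i) = 0 := by
        rw [hℓeq, ← hab (x i) (hsub Set.left_mem_uIcc), hfx]; ring
      have h0y := zero_all _ (hb ℓ hℓL) x hx h0 y hy
      rw [hab (y i) (hsub Set.right_mem_uIcc)]
      rw [hℓeq] at h0y
      linarith
  by_cases h : ∃ x ∈ C, f (x i) = x j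
  · obtain ⟨x, hx, hfx⟩ := h
    exact Or.inl fun y hy => key x hx y hy hfx
  · exact Or.inr fun y hy hfy => h ⟨y, hy, hfy⟩
end
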